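/- arXiv:2010.14280 — 5 statements merged into one kernel-verified Lean document; each statement's English description precedes it below -/
import Mathlib

section
/- Let u₁, ..., u_n be unit vectors in ℝ^N (N ≥ 1) whose average z = (1/n)·Σᵢ uᵢ satisfies |z| ≤ 1 − 2b for some b ∈ (0, 1/2). Then for every index i, the number of indices l ∈ {1,...,n} with ⟨uᵢ, u_l⟩ ≤ 1 − b is at least B·n, where B = b/(4 − 2b). -/
/-!
Fix `i` and let `S` be the set of indices `l` with `⟪u i, u l⟫ ≤ 1 - b`. By Cauchy–Schwarz,
`∑ₗ ⟪u i, u l⟫ = n ⟪u i, z⟫ ≤ n (1 - 2b)`. On the other hand every inner product is at least `-1`,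
and those outside `S` exceed `1 - b`, so the same sum is at least `(1 - b) n - (2 - b) |S|`.
Comparing the two bounds gives `b n ≤ (2 - b) |S| ≤ (4 - 2b) |S|`.
-/

open RealInnerProductSpace Finset

variable {ι : Type*} [Fintype ι]

theorem sub_mul_card_filter_le_sum {f : ι → ℝ} {m : ℝ} (hf : ∀ l, m ≤ f l) (t : ℝ) :
    t * Fintype.card ι - (t - m) * #{l | f l ≤ t} ≤ ∑ l, f l := by
  have hle : #{l | f l ≤ t} * m ≤ ∑ l with f l ≤ t, f l := by
    simpa using card_nsmul_le_sum _ f m fun l _ => hf l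
  have hgt : #{l | ¬f l ≤ t} * t ≤ ∑ l with ¬f l ≤ t, f l := by
    simpa using card_nsmul_le_sum _ f t fun l hl => (not_le.mp (mem_filter.mp hl).2).le
  have hcard : (#{l | f l ≤ t} : ℝ) + #{l | ¬f l ≤ t} = Fintype.card ι := by
    exact_mod_cast card_filter_add_card_filter_not (s := univ) (fun l => f l ≤ t)
  rw [← sum_filter_add_sum_filter_not univ (fun l => f l ≤ t), ← hcard]
  linarith

variable {E : Type*} [NormedAddCommGroup E] [InnerProductSpace ℝ E]

theorem sum_inner_le_card_mul_norm_average {x : E} (hx : ‖x‖ ≤ 1) (u : ι → E) :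
    ∑ l, ⟪x, u l⟫ ≤ Fintype.card ι * ‖(Fintype.card ι : ℝ)⁻¹ • ∑ l, u l‖ := by
  rcases isEmpty_or_nonempty ι with hι | hι
  · simp
  have hcard : (Fintype.card ι : ℝ) ≠ 0 := by positivity
  rw [norm_smul, norm_inv, Real.norm_natCast, mul_inv_cancel_left₀ hcard, ← inner_sum]
  calc ⟪x, ∑ l, u l⟫ ≤ ‖x‖ * ‖∑ l, u l‖ := real_inner_le_norm _ _
    _ ≤ ‖∑ l, u l‖ := mul_le_of_le_one_left (norm_nonneg _) hx

theorem mul_card_le_card_filter_inner_le {u : ι → E} (hu : ∀ l, ‖u l‖ = 1) {b : ℝ}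
    (hz : ‖(Fintype.card ι : ℝ)⁻¹ • ∑ l, u l‖ ≤ 1 - 2 * b) {x : E} (hx : ‖x‖ ≤ 1) :
    b * Fintype.card ι ≤ (2 - b) * #{l | ⟪x, u l⟫ ≤ 1 - b} := by
  have hlower : ∀ l, -1 ≤ ⟪x, u l⟫ := fun l =>
    (abs_le.mp <| (abs_real_inner_le_norm x (u l)).trans <| by rwa [hu l, mul_one]).1
  have hcount := sub_mul_card_filter_le_sum hlower (1 - b)
  have hsum := sum_inner_le_card_mul_norm_average hx u
  have := mul_le_mul_of_nonneg_left hz (Nat.cast_nonneg (Fintype.card ι) : (0 : ℝ) ≤ _)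
  linarith

theorem many_nonaligned_indices_general
    (N n : ℕ) (b : ℝ) (hb' : b < 1/2)
    (u : Fin n → EuclideanSpace ℝ (Fin N)) (hu : ∀ i, ‖u i‖ = 1)
    (hz : ‖((n : ℝ))⁻¹ • ∑ i, u i‖ ≤ 1 - 2 * b) :
    ∀ i : Fin n,
      (b / (4 - 2 * b)) * n ≤
        ((Finset.univ.filter (fun l : Fin n => ⟪u i, u l⟫ ≤ 1 - b)).card : ℝ) := by
  intro i
  have hz' : ‖(Fintype.card (Fin n) : ℝ)⁻¹ • ∑ l, u l‖ ≤ 1 - 2 * b := by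
    rwa [Fintype.card_fin]
  have key := mul_card_le_card_filter_inner_le hu hz' (hu i).le
  rw [Fintype.card_fin] at key
  have hS : (0 : ℝ) ≤ #{l | ⟪u i, u l⟫ ≤ 1 - b} := Nat.cast_nonneg _
  rw [div_mul_eq_mul_div, div_le_iff₀ (by linarith)]
  linarith [mul_le_mul_of_nonneg_right (by linarith : 2 - b ≤ 4 - 2 * b) hS]

theorem many_nonaligned_indices
    (N n : ℕ) (hn : 0 < n) (b : ℝ) (hb : 0 < b) (hb' : b < 1/2)
    (u : Fin n → EuclideanSpace ℝ (Fin N)) (hu : ∀ i, ‖u i‖ = 1)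
    (hz : ‖((n : ℝ))⁻¹ • ∑ i, u i‖ ≤ 1 - 2 * b) :
    ∀ i : Fin n,
      (b / (4 - 2 * b)) * n ≤
        ((Finset.univ.filter (fun l : Fin n => ⟪u i, u l⟫ ≤ 1 - b)).card : ℝ) :=
  many_nonaligned_indices_general N n b hb' u hu hz
end

section
/- Let u₁, ..., u_n be unit vectors in ℝ^N whose average z satisfies |z| ≤ 1 − 2b with b ∈ (0, 1/2), and suppose for some index i that the set A = { l : ⟨uᵢ, u_l⟩ > 1 − b } satisfies #A ≥ (1 − B)·n with B = b/(4 − 2b). Then |z| ≥ (2 − b)(1 − B) − 1 = 1 − (3/2)b, a contradiction; hence no such index i exists. -/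
/-!
Summing `⟪uᵢ, u_l⟫` over `l` gives `n ⟪uᵢ, z⟫ ≤ n ‖z‖ ≤ (1 - 2b) n`. On the other hand each term
exceeds `1 - b` on `A` and is at least `-1` elsewhere, so the sum is at least
`(2 - b) #A - n ≥ ((2 - b)(1 - B) - 1) n = (1 - 3b/2) n`, which exceeds `(1 - 2b) n`.
-/

open RealInnerProductSpace Finset

theorem sum_real_inner_le_card_mul_norm_average {E ι : Type*} [NormedAddCommGroup E]
    [InnerProductSpace ℝ E] [Fintype ι] (v : E) (u : ι → E) :
    ∑ l, ⟪v, u l⟫ ≤ ‖v‖ * (Fintype.card ι * ‖(Fintype.card ι : ℝ)⁻¹ • ∑ l, u l‖) := by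
  rcases (Fintype.card ι).eq_zero_or_pos with hι | hι
  · simp [Fintype.card_eq_zero_iff.mp hι]
  have hι' : (Fintype.card ι : ℝ) ≠ 0 := by positivity
  rw [norm_smul, norm_inv, Real.norm_natCast, mul_inv_cancel_left₀ hι', ← inner_sum]
  exact real_inner_le_norm v (∑ l, u l)

theorem card_mul_sub_card_le_sum_of_neg_one_le {ι : Type*} [Fintype ι] {f : ι → ℝ}
    (hf : ∀ l, -1 ≤ f l) (t : ℝ) :
    (t + 1) * #{l | t < f l} - Fintype.card ι ≤ ∑ l, f l := by
  have hlarge : (#{l | t < f l} : ℝ) * (t + 1) ≤ ∑ l ∈ {l | t < f l}, (f l + 1) := by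
    rw [← nsmul_eq_mul]
    exact card_nsmul_le_sum _ _ _ (fun l hl => by linarith [(mem_filter.mp hl).2])
  have hall : ∑ l ∈ {l | t < f l}, (f l + 1) ≤ ∑ l, (f l + 1) :=
    sum_le_sum_of_subset_of_nonneg (subset_univ _) (fun l _ _ => by linarith [hf l])
  have htotal : ∑ l, (f l + 1) = ∑ l, f l + Fintype.card ι := by simp [sum_add_distrib]
  linarith

theorem no_large_aligned_set
    (N n : ℕ) (hn : 0 < n) (b : ℝ) (hb : 0 < b) (hb' : b < 1/2)
    (u : Fin n → EuclideanSpace ℝ (Fin N)) (hu : ∀ i, ‖u i‖ = 1)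
    (hz : ‖((n : ℝ))⁻¹ • ∑ l, u l‖ ≤ 1 - 2 * b)
    (i : Fin n)
    (hA : (1 - b / (4 - 2 * b)) * n ≤
        ((Finset.univ.filter (fun l : Fin n => 1 - b < ⟪u i, u l⟫)).card : ℝ)) :
    False := by
  have hn' : (0 : ℝ) < n := by exact_mod_cast hn
  have hupper : ∑ l, ⟪u i, u l⟫ ≤ n * (1 - 2 * b) := by
    have := sum_real_inner_le_card_mul_norm_average (u i) u
    rw [hu i, one_mul, Fintype.card_fin] at this
    exact this.trans (mul_le_mul_of_nonneg_left hz hn'.le)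
  have hlower := card_mul_sub_card_le_sum_of_neg_one_le
    (fun l => neg_one_le_real_inner_of_norm_eq_one (hu i) (hu l)) (1 - b)
  rw [Fintype.card_fin] at hlower
  have hfactor : (1 - b + 1) * (1 - b / (4 - 2 * b)) = 2 - 3 / 2 * b := by
    have h : 2 - b ≠ 0 := by linarith
    rw [show (4 : ℝ) - 2 * b = 2 * (2 - b) by ring]
    field_simp
    ring
  have hcard := mul_le_mul_of_nonneg_left hA (by linarith : (0 : ℝ) ≤ 1 - b + 1)
  rw [← mul_assoc, hfactor] at hcard
  linarith [mul_pos hb hn']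
end

section
/- Let u₁, ..., u_n be unit vectors in ℝ^N whose average satisfies |⟨u⟩| ≤ 1 − 2b for b ∈ (0, 1/2), and let B = b/(4 − 2b). Then there exist at least ⌊(B/2)·n⌋ pairwise disjoint pairs of indices (i_s, l_s) with i_s ≠ l_s such that ⟨u_{i_s}, u_{l_s}⟩ ≤ 1 − b for every s. -/
/-!
Call `i` and `l` nonaligned when `⟪u i, u l⟫ ≤ 1 - b`, and remove nonaligned pairs greedily.
This leaves `m` disjoint pairs and a set `T` of `n - 2m` pairwise aligned unit vectors. Since
`‖∑_{i ∈ T} u i‖²` is the sum of all their inner products, `|T| (1 - b) ≤ ‖∑_{i ∈ T} u i‖`, while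
`‖∑_{i ∈ T} u i‖ ≤ ‖∑ u i‖ + (n - |T|) ≤ (1 - 2b) n + n - |T|`. Hence `|T| (2 - b) ≤ (2 - 2b) n`,
that is `m ≥ b n / (4 - 2b)`.
-/

open RealInnerProductSpace Finset

namespace SimpleGraph

variable {α : Type*} [DecidableEq α] (G : SimpleGraph α)

/-- Remove edges of `G` from `S` greedily until none is left. -/
theorem exists_pairwiseDisjoint_edges_and_isIndepSet (S : Finset α) :
    ∃ (M : Finset (α × α)) (T : Finset α), #S = 2 * #M + #T ∧
      (∀ q ∈ M, q.1 ∈ S ∧ q.2 ∈ S ∧ G.Adj q.1 q.2) ∧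
      (M : Set (α × α)).PairwiseDisjoint (fun q ↦ ({q.1, q.2} : Set α)) ∧
      T ⊆ S ∧ G.IsIndepSet T := by
  induction S using Finset.strongInduction with
  | H S ih =>
    by_cases hedge : ∃ i ∈ S, ∃ l ∈ S, G.Adj i l
    · obtain ⟨i, hi, l, hl, hil⟩ := hedge
      have hpair : {i, l} ⊆ S := insert_subset hi (singleton_subset_iff.mpr hl)
      obtain ⟨M, T, hcard, hM, hdisj, hTS, hT⟩ :=
        ih (S \ {i, l}) (sdiff_ssubset hpair (insert_nonempty _ _))
      have hfresh : ∀ q ∈ M, q.1 ∉ ({i, l} : Set α) ∧ q.2 ∉ ({i, l} : Set α) := by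
        intro q hq
        obtain ⟨h1, h2, -⟩ := hM q hq
        simp only [mem_sdiff] at h1 h2
        exact ⟨by simpa using h1.2, by simpa using h2.2⟩
      have hnew : (i, l) ∉ M := fun h ↦ (hfresh _ h).1 (by simp)
      refine ⟨insert (i, l) M, T, ?_, ?_, ?_, hTS.trans sdiff_subset, hT⟩
      · have h2 := card_le_card hpair
        rw [card_sdiff_of_subset hpair, card_pair hil.ne] at hcard
        rw [card_pair hil.ne] at h2
        rw [card_insert_of_notMem hnew]
        omega
      · simp only [mem_insert, forall_eq_or_imp]
        exact ⟨⟨hi, hl, hil⟩, fun q hq ↦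
          ⟨mem_sdiff.mp (hM q hq).1 |>.1, mem_sdiff.mp (hM q hq).2.1 |>.1, (hM q hq).2.2⟩⟩
      · rw [coe_insert]
        refine hdisj.insert fun q hq _ ↦ ?_
        rw [disjoint_comm, Set.disjoint_insert_left, Set.disjoint_singleton_left]
        exact hfresh q hq
    · exact ⟨∅, S, by simp, by simp, by simp, subset_rfl,
        fun i hi j hj _ hij ↦ hedge ⟨i, hi, j, hj, hij⟩⟩

end SimpleGraph

theorem Finset.exists_fin_embedding_mem {β : Type*} {s : Finset β} {k : ℕ} (hk : k ≤ #s) :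
    ∃ f : Fin k ↪ β, ∀ i, f i ∈ s :=
  ⟨(Fin.castLEEmb hk).trans (s.equivFin.symm.toEmbedding.trans (Function.Embedding.subtype _)),
    fun i ↦ by simp⟩

theorem norm_sum_le_norm_sum_add_card_compl {ι E : Type*} [Fintype ι] [DecidableEq ι]
    [SeminormedAddCommGroup E] {u : ι → E}
    (hu : ∀ i, ‖u i‖ ≤ 1) (T : Finset ι) : ‖∑ i ∈ T, u i‖ ≤ ‖∑ i, u i‖ + #Tᶜ := by
  rw [eq_sub_of_add_eq (sum_add_sum_compl T u)]
  refine (norm_sub_le _ _).trans (add_le_add_right ?_ _)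
  simpa using norm_sum_le_of_le Tᶜ fun i _ ↦ hu i

theorem norm_sum_eq_card_mul_norm_average {ι E : Type*} [Fintype ι] [SeminormedAddCommGroup E]
    [NormedSpace ℝ E] (u : ι → E) :
    ‖∑ i, u i‖ = Fintype.card ι * ‖(Fintype.card ι : ℝ)⁻¹ • ∑ i, u i‖ := by
  rcases isEmpty_or_nonempty ι with hι | hι
  · simp
  · rw [norm_smul, norm_inv, RCLike.norm_natCast, mul_inv_cancel_left₀ (by positivity)]

section InnerProductSpace

variable {ι E : Type*} [NormedAddCommGroup E] [InnerProductSpace ℝ E]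

def innerLeGraph (u : ι → E) (c : ℝ) : SimpleGraph ι where
  Adj i j := i ≠ j ∧ ⟪u i, u j⟫ ≤ c
  symm := ⟨fun _ _ h ↦ ⟨h.1.symm, real_inner_comm (u _) (u _) ▸ h.2⟩⟩
  loopless := ⟨fun _ h ↦ h.1 rfl⟩

theorem card_mul_le_norm_sum_of_le_inner {T : Finset ι} {u : ι → E} (hu : ∀ i ∈ T, ‖u i‖ = 1)
    {c : ℝ} (hc₀ : 0 ≤ c) (hc₁ : c ≤ 1) (h : ∀ i ∈ T, ∀ j ∈ T, i ≠ j → c ≤ ⟪u i, u j⟫) :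
    #T * c ≤ ‖∑ i ∈ T, u i‖ := by
  have hinner : ∀ i ∈ T, ∀ j ∈ T, c ≤ ⟪u i, u j⟫ := by
    intro i hi j hj
    rcases eq_or_ne i j with rfl | hij
    · rw [real_inner_self_eq_norm_sq, hu i hi]
      linarith
    · exact h i hi j hj hij
  refine (sq_le_sq₀ (by positivity) (norm_nonneg _)).mp ?_
  calc (#T * c) ^ 2 ≤ ∑ _i ∈ T, ∑ _j ∈ T, c := by
        simp only [sum_const, nsmul_eq_mul]
        nlinarith [mul_nonneg (mul_nonneg (sq_nonneg (#T : ℝ)) hc₀) (sub_nonneg.mpr hc₁)]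
    _ ≤ ∑ i ∈ T, ∑ j ∈ T, ⟪u i, u j⟫ := sum_le_sum fun i hi ↦ sum_le_sum fun j hj ↦ hinner i hi j hj
    _ = ‖∑ i ∈ T, u i‖ ^ 2 := by
        rw [← real_inner_self_eq_norm_sq, sum_inner]
        simp_rw [inner_sum]

end InnerProductSpace

theorem exists_disjoint_nonaligned_pairs_general
    (N n : ℕ) (b : ℝ) (hb : 0 < b) (hb' : b < 1/2)
    (u : Fin n → EuclideanSpace ℝ (Fin N)) (hu : ∀ i, ‖u i‖ = 1)
    (hz : ‖((n : ℝ))⁻¹ • ∑ i, u i‖ ≤ 1 - 2 * b) :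
    ∃ p : Fin ⌊(b / (4 - 2 * b)) / 2 * n⌋₊ → Fin n × Fin n,
      (∀ s, (p s).1 ≠ (p s).2) ∧
      (∀ s, ⟪u (p s).1, u (p s).2⟫ ≤ 1 - b) ∧
      (∀ r s, r ≠ s →
        ({(p r).1, (p r).2} : Set (Fin n)) ∩ {(p s).1, (p s).2} = ∅) := by
  have hsum : ‖∑ i, u i‖ ≤ n * (1 - 2 * b) := by
    simpa [norm_sum_eq_card_mul_norm_average] using
      mul_le_mul_of_nonneg_left hz n.cast_nonneg
  obtain ⟨M, T, hcard, hM, hdisj, -, hT⟩ :=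
    (innerLeGraph u (1 - b)).exists_pairwiseDisjoint_edges_and_isIndepSet univ
  have hT_aligned : #T * (1 - b) ≤ ‖∑ i ∈ T, u i‖ :=
    card_mul_le_norm_sum_of_le_inner (fun i _ ↦ hu i) (by linarith) (by linarith)
      fun i hi j hj hij ↦ (not_le.mp fun hle ↦ hT hi hj hij ⟨hij, hle⟩).le
  have hT_rest := norm_sum_le_norm_sum_add_card_compl (fun i ↦ (hu i).le) T
  have hM_large : ⌊(b / (4 - 2 * b)) / 2 * n⌋₊ ≤ #M := by
    rw [card_univ, Fintype.card_fin] at hcard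
    rw [card_compl, Fintype.card_fin, Nat.cast_sub (by omega)] at hT_rest
    refine Nat.floor_le_of_le ?_
    rw [div_div, div_mul_eq_mul_div, div_le_iff₀ (by linarith)]
    have : (n : ℝ) = 2 * #M + #T := by exact_mod_cast hcard
    nlinarith
  obtain ⟨p, hpM⟩ := exists_fin_embedding_mem hM_large
  exact ⟨p, fun s ↦ (hM _ (hpM s)).2.2.1, fun s ↦ (hM _ (hpM s)).2.2.2, fun r s hrs ↦
    Set.disjoint_iff_inter_eq_empty.mp (hdisj (hpM r) (hpM s) (p.injective.ne hrs))⟩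

theorem exists_disjoint_nonaligned_pairs
    (N n : ℕ) (hn : 0 < n) (b : ℝ) (hb : 0 < b) (hb' : b < 1/2)
    (u : Fin n → EuclideanSpace ℝ (Fin N)) (hu : ∀ i, ‖u i‖ = 1)
    (hz : ‖((n : ℝ))⁻¹ • ∑ i, u i‖ ≤ 1 - 2 * b) :
    ∃ p : Fin ⌊(b / (4 - 2 * b)) / 2 * n⌋₊ → Fin n × Fin n,
      (∀ s, (p s).1 ≠ (p s).2) ∧
      (∀ s, ⟪u (p s).1, u (p s).2⟫ ≤ 1 - b) ∧
      (∀ r s, r ≠ s →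
        ({(p r).1, (p r).2} : Set (Fin n)) ∩ {(p s).1, (p s).2} = ∅) :=
  exists_disjoint_nonaligned_pairs_general N n b hb hb' u hu hz
end

section
/- Let u₁, ..., u_n be unit vectors in ℝ^N (N ≥ 2), let z ∈ ℝ^N with |z| ≤ 1 − 2b for b ∈ (0, 1/2), and set η = |(1/n)Σᵢ uᵢ − z|. Suppose also |(1/n)Σᵢ uᵢ| ≤ 1 − 2b. Choose c > 0 with √(4 − 2b) < 2 − c and set P = ⌊ηn/c⌋ + 1, and assume B·n > 2⌊ηn/c⌋ + 1 where B = b/(4 − 2b). Then there exists a family (v₁, ..., v_n) of unit vectors differing from (u₁, ..., u_n) in at most 2P indices such that (1/n)Σᵢ vᵢ = z exactly. -/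
/-!
Since the average of the unit vectors `u i` has norm at most `1 - 2b`, they cannot be almost
parallel: if all pairwise inner products among `n - m` of them exceeded `1 - b`, their sum would
have norm at least `(1 - b)(n - m)`, which is too large once `(2 - b) m < b n`. So one can
greedily pick `P` disjoint pairs with `‖u i + u j‖ ≤ √(4 - 2b) < 2 - c`, forming a set `S` of
`2P` indices. The defect `n z - ∑ u i` has norm `η n < c P`, hence `n z - ∑_{i ∉ S} u i` has norm
at most `2P`; as `N ≥ 2`, it is `P` copies of `x + y` for two unit vectors `x, y`, and these
replace the `u i` with `i ∈ S`.
-/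

open Finset RealInnerProductSpace

section UnitVectors

variable {E : Type*} [NormedAddCommGroup E] [InnerProductSpace ℝ E] [FiniteDimensional ℝ E]

theorem exists_norm_eq_one_inner_eq_zero (hE : 2 ≤ Module.finrank ℝ E) (w : E) :
    ∃ p : E, ‖p‖ = 1 ∧ ⟪w, p⟫ = 0 := by
  have hline : Module.finrank ℝ (ℝ ∙ w) ≤ 1 := by
    simpa using finrank_span_le_card ({w} : Set E)
  have hperp : (ℝ ∙ w)ᗮ ≠ ⊥ := by
    intro h
    have := (ℝ ∙ w).finrank_add_finrank_orthogonal
    rw [h, finrank_bot] at this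
    omega
  obtain ⟨q, hq, hq0⟩ := Submodule.exists_mem_ne_zero_of_ne_bot hperp
  refine ⟨‖q‖⁻¹ • q, norm_smul_inv_norm hq0, ?_⟩
  rw [real_inner_smul_right, Submodule.inner_right_of_mem_orthogonal
    (Submodule.mem_span_singleton_self w) hq, mul_zero]

theorem exists_norm_eq_one_add_eq (hE : 2 ≤ Module.finrank ℝ E) {w : E} (hw : ‖w‖ ≤ 2) :
    ∃ x y : E, ‖x‖ = 1 ∧ ‖y‖ = 1 ∧ x + y = w := by
  obtain ⟨p, hp, hwp⟩ := exists_norm_eq_one_inner_eq_zero hE w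
  have hunit : ∀ t : ℝ, t ^ 2 = 1 - ‖w‖ ^ 2 / 4 → ‖(1 / 2 : ℝ) • w + t • p‖ = 1 := by
    intro t ht
    have hpyth := norm_add_sq_eq_norm_sq_add_norm_sq_real
      (by rw [real_inner_smul_left, real_inner_smul_right, hwp]; ring :
        ⟪(1 / 2 : ℝ) • w, t • p⟫ = 0)
    rw [norm_smul, norm_smul, hp, Real.norm_eq_abs, Real.norm_eq_abs] at hpyth
    have : ‖(1 / 2 : ℝ) • w + t • p‖ ^ 2 = 1 := by
      nlinarith [sq_abs t, abs_of_pos (by norm_num : (0 : ℝ) < 1 / 2)]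
    exact (pow_eq_one_iff_of_nonneg (norm_nonneg _) two_ne_zero).mp this
  have hsq := Real.sq_sqrt (by nlinarith [norm_nonneg w] : 0 ≤ 1 - ‖w‖ ^ 2 / 4)
  exact ⟨_, _, hunit _ hsq, hunit (-√(1 - ‖w‖ ^ 2 / 4)) (by rw [neg_sq, hsq]), by module⟩

theorem exists_norm_eq_one_sum_eq {ι : Type*} [DecidableEq ι]
    (hE : 2 ≤ Module.finrank ℝ E) {S : Finset ι} {k : ℕ} (hS : #S = 2 * k) {w : E}
    (hw : ‖w‖ ≤ 2 * k) :
    ∃ f : ι → E, (∀ i, ‖f i‖ = 1) ∧ ∑ i ∈ S, f i = w := by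
  have hwk : ‖(k : ℝ)⁻¹ • w‖ ≤ 2 := by
    rcases k.eq_zero_or_pos with rfl | hk
    · simp
    · rw [norm_smul, norm_inv, Real.norm_natCast, inv_mul_le_iff₀ (by positivity)]
      linarith
  obtain ⟨x, y, hx, hy, hxy⟩ := exists_norm_eq_one_add_eq hE hwk
  obtain ⟨T, hTS, hT⟩ := exists_subset_card_eq (show k ≤ #S by omega)
  refine ⟨T.piecewise (fun _ ↦ x) (fun _ ↦ y), fun i ↦ ?_, ?_⟩
  · by_cases hi : i ∈ T <;> simp [hi, hx, hy]
  · have hST : #(S \ T) = k := by rw [card_sdiff_of_subset hTS]; omega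
    rw [sum_piecewise, inter_eq_right.mpr hTS, sum_const, sum_const, hT, hST, ← smul_add,
      hxy]
    rcases k.eq_zero_or_pos with rfl | hk
    · simpa using (norm_le_zero_iff.mp (by simpa using hw)).symm
    · rw [← Nat.cast_smul_eq_nsmul ℝ, smul_smul, mul_inv_cancel₀ (by positivity), one_smul]

theorem exists_norm_eq_one_eq_off_sum_eq {ι : Type*} [Fintype ι] [DecidableEq ι]
    (hE : 2 ≤ Module.finrank ℝ E) {u : ι → E} (hu : ∀ i, ‖u i‖ = 1) {S : Finset ι} {k : ℕ}
    (hS : #S = 2 * k) {w : E} (hw : ‖w - ∑ i, u i‖ + ‖∑ i ∈ S, u i‖ ≤ 2 * k) :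
    ∃ v : ι → E, (∀ i, ‖v i‖ = 1) ∧ (∀ i ∉ S, v i = u i) ∧ ∑ i, v i = w := by
  have hdecomp : w - ∑ i ∈ Sᶜ, u i = (w - ∑ i, u i) + ∑ i ∈ S, u i := by
    rw [← sum_compl_add_sum S u]; abel
  obtain ⟨f, hf, hfS⟩ := exists_norm_eq_one_sum_eq hE hS
    (w := w - ∑ i ∈ Sᶜ, u i) (by rw [hdecomp]; exact (norm_add_le _ _).trans hw)
  refine ⟨S.piecewise f u, fun i ↦ ?_, fun i hi ↦ piecewise_eq_of_notMem _ _ _ hi, ?_⟩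
  · by_cases hi : i ∈ S <;> simp [hi, hf, hu]
  · rw [sum_piecewise, univ_inter, ← compl_eq_univ_sdiff, hfS, sub_add_cancel]

end UnitVectors

section Pairing

variable {ι E : Type*} [NormedAddCommGroup E] [InnerProductSpace ℝ E]

theorem mul_card_sq_le_norm_sum_sq {u : ι → E} {T : Finset ι} {r : ℝ}
    (h : ∀ i ∈ T, ∀ j ∈ T, r ≤ ⟪u i, u j⟫) : r * #T ^ 2 ≤ ‖∑ i ∈ T, u i‖ ^ 2 :=
  calc r * #T ^ 2 = ∑ i ∈ T, ∑ j ∈ T, r := by simp only [sum_const, nsmul_eq_mul]; ring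
    _ ≤ ∑ i ∈ T, ∑ j ∈ T, ⟪u i, u j⟫ := sum_le_sum fun i hi ↦ sum_le_sum fun j hj ↦ h i hi j hj
    _ = ‖∑ i ∈ T, u i‖ ^ 2 := by
      rw [← real_inner_self_eq_norm_sq, sum_inner]
      simp_rw [inner_sum]

theorem norm_add_le_sqrt_of_inner_le {x y : E} (hx : ‖x‖ = 1) (hy : ‖y‖ = 1) {b : ℝ}
    (h : ⟪x, y⟫ ≤ 1 - b) : ‖x + y‖ ≤ √(4 - 2 * b) :=
  Real.le_sqrt_of_sq_le (by rw [norm_add_sq_real, hx, hy]; linarith)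

variable [Fintype ι] [DecidableEq ι]

theorem exists_pair_inner_le {u : ι → E} (hu : ∀ i, ‖u i‖ = 1) {b : ℝ} (hb : 0 ≤ b)
    (hsum : ‖∑ i, u i‖ ≤ (1 - 2 * b) * Fintype.card ι) {S : Finset ι}
    (hS : (2 - b) * #S < b * Fintype.card ι) :
    ∃ i j, i ∉ S ∧ j ∉ S ∧ i ≠ j ∧ ⟪u i, u j⟫ ≤ 1 - b := by
  by_contra! h
  have hinner : ∀ i ∈ Sᶜ, ∀ j ∈ Sᶜ, 1 - b ≤ ⟪u i, u j⟫ := by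
    intro i hi j hj
    rw [mem_compl] at hi hj
    rcases eq_or_ne i j with rfl | hij
    · rw [real_inner_self_eq_norm_sq, hu]; linarith
    · exact (h i j hi hj hij).le
  have hcard : (#Sᶜ : ℝ) = Fintype.card ι - #S := by
    rw [card_compl, Nat.cast_sub (card_le_univ S)]
  have hlower : (1 - b) * #Sᶜ ≤ ‖∑ i ∈ Sᶜ, u i‖ := by
    have := mul_card_sq_le_norm_sum_sq hinner
    rcases le_or_gt b 1 with hb1 | hb1 <;>
      nlinarith [norm_nonneg (∑ i ∈ Sᶜ, u i), Nat.cast_nonneg (α := ℝ) #Sᶜ]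
  have hupper : ‖∑ i ∈ Sᶜ, u i‖ ≤ (1 - 2 * b) * Fintype.card ι + #S := by
    rw [eq_sub_of_add_eq (sum_compl_add_sum S u)]
    refine (norm_sub_le _ _).trans (add_le_add hsum ?_)
    simpa [hu] using norm_sum_le S u
  rw [hcard] at hlower
  linarith

end Pairing

theorem exists_card_eq_two_mul_norm_sum_le {ι E : Type*} [DecidableEq ι]
    [SeminormedAddCommGroup E] (u : ι → E) (d : ℝ) (k : ℕ)
    (h : ∀ S : Finset ι, #S < 2 * k → ∃ i j, i ∉ S ∧ j ∉ S ∧ i ≠ j ∧ ‖u i + u j‖ ≤ d) :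
    ∃ S : Finset ι, #S = 2 * k ∧ ‖∑ i ∈ S, u i‖ ≤ k * d := by
  induction k with
  | zero => exact ⟨∅, by simp, by simp⟩
  | succ k ih =>
    obtain ⟨S, hS, hSd⟩ := ih fun S hS ↦ h S (by omega)
    obtain ⟨i, j, hi, hj, hij, hd⟩ := h S (by omega)
    have hi' : i ∉ insert j S := by simp [hij, hi]
    refine ⟨insert i (insert j S), ?_, ?_⟩
    · rw [card_insert_of_notMem hi', card_insert_of_notMem hj, hS]; ring
    rw [sum_insert hi', sum_insert hj, ← add_assoc]
    calc ‖u i + u j + ∑ x ∈ S, u x‖ ≤ ‖u i + u j‖ + ‖∑ x ∈ S, u x‖ := norm_add_le _ _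
      _ ≤ (k + 1 : ℕ) * d := by push_cast; linarith

open Classical in

theorem average_correction_step_general
    (N n : ℕ) (hN : 2 ≤ N) (hn : 0 < n)
    (b : ℝ) (hb : 0 < b) (hb' : b < 1/2)
    (u : Fin n → EuclideanSpace ℝ (Fin N)) (hu : ∀ i, ‖u i‖ = 1)
    (z : EuclideanSpace ℝ (Fin N))
    (havg : ‖((n : ℝ))⁻¹ • ∑ i, u i‖ ≤ 1 - 2 * b)
    (c : ℝ) (hc : 0 < c) (hcb : Real.sqrt (4 - 2 * b) < 2 - c)
    (η : ℝ) (hη : η = ‖((n : ℝ))⁻¹ • ∑ i, u i - z‖)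
    (P : ℕ) (hP : P = ⌊η * n / c⌋₊ + 1)
    (hBn : 2 * (⌊η * n / c⌋₊ : ℝ) + 1 < (b / (4 - 2 * b)) * n) :
    ∃ v : Fin n → EuclideanSpace ℝ (Fin N),
      (∀ i, ‖v i‖ = 1) ∧
      (Finset.univ.filter (fun i : Fin n => v i ≠ u i)).card ≤ 2 * P ∧
      ((n : ℝ))⁻¹ • ∑ i, v i = z := by
  have hn' : (n : ℝ) ≠ 0 := by positivity
  have hsum : ‖∑ i, u i‖ ≤ (1 - 2 * b) * Fintype.card (Fin n) := by
    rw [norm_smul, norm_inv, Real.norm_natCast, inv_mul_le_iff₀ (by positivity)] at havg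
    simpa [mul_comm] using havg
  have hpairs : ∀ S : Finset (Fin n), #S < 2 * P →
      ∃ i j, i ∉ S ∧ j ∉ S ∧ i ≠ j ∧ ‖u i + u j‖ ≤ √(4 - 2 * b) := by
    intro S hS
    have hS' : (#S : ℝ) ≤ 2 * ⌊η * n / c⌋₊ + 1 := by
      have : #S ≤ 2 * ⌊η * n / c⌋₊ + 1 := by omega
      exact_mod_cast this
    rw [div_mul_eq_mul_div, lt_div_iff₀ (by linarith)] at hBn
    obtain ⟨i, j, hi, hj, hij, h⟩ := exists_pair_inner_le hu hb.le hsum (S := S)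
      (by rw [Fintype.card_fin]; nlinarith)
    exact ⟨i, j, hi, hj, hij, norm_add_le_sqrt_of_inner_le (hu i) (hu j) h⟩
  obtain ⟨S, hS, hSu⟩ := exists_card_eq_two_mul_norm_sum_le u _ P hpairs
  have hfloor : η * n < c * P := by
    rw [hP, Nat.cast_succ, mul_comm c, ← div_lt_iff₀ hc]
    exact Nat.lt_floor_add_one _
  have hdefect : ‖(n : ℝ) • z - ∑ i, u i‖ = n * η := by
    rw [hη, ← norm_neg, ← norm_smul_of_nonneg (Nat.cast_nonneg n), smul_sub, smul_inv_smul₀ hn']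
    abel_nf
  obtain ⟨v, hv, hvS, hvsum⟩ := exists_norm_eq_one_eq_off_sum_eq (by simpa using hN) hu hS
    (w := (n : ℝ) • z) (by rw [hdefect]; nlinarith)
  refine ⟨v, hv, (card_le_card fun i hi ↦ ?_).trans hS.le, by rw [hvsum, inv_smul_smul₀ hn']⟩
  by_contra hiS
  exact (mem_filter.mp hi).2 (hvS i hiS)

open Classical in
theorem average_correction_step
    (N n : ℕ) (hN : 2 ≤ N) (hn : 0 < n)
    (b : ℝ) (hb : 0 < b) (hb' : b < 1/2)
    (u : Fin n → EuclideanSpace ℝ (Fin N)) (hu : ∀ i, ‖u i‖ = 1)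
    (z : EuclideanSpace ℝ (Fin N)) (hz : ‖z‖ ≤ 1 - 2 * b)
    (havg : ‖((n : ℝ))⁻¹ • ∑ i, u i‖ ≤ 1 - 2 * b)
    (c : ℝ) (hc : 0 < c) (hcb : Real.sqrt (4 - 2 * b) < 2 - c)
    (η : ℝ) (hη : η = ‖((n : ℝ))⁻¹ • ∑ i, u i - z‖)
    (P : ℕ) (hP : P = ⌊η * n / c⌋₊ + 1)
    (hBn : 2 * (⌊η * n / c⌋₊ : ℝ) + 1 < (b / (4 - 2 * b)) * n) :
    ∃ v : Fin n → EuclideanSpace ℝ (Fin N),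
      (∀ i, ‖v i‖ = 1) ∧
      (Finset.univ.filter (fun i : Fin n => v i ≠ u i)).card ≤ 2 * P ∧
      ((n : ℝ))⁻¹ • ∑ i, v i = z :=
  average_correction_step_general N n hN hn b hb hb' u hu z havg c hc hcb η hη P hP hBn
end

section
/- Let g: (0, ∞) → ℝ be bounded, and suppose there exist constants C̄ > 0 and R > 0 such that for all s > t > 0: g(s) ≤ ⌊s/t⌋^m (t^m/s^m)(g(t) + 1/t) + (C̄/s^m)·(s^m − ⌊s/t⌋^m t^m + ⌊s/t⌋^m((t+R)^m − (t−R)^m)). Then the limit lim_{t→∞} g(t) exists. -/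
/-!
Fix `t > 0` and let `s → ∞` in the hypothesis: since `⌊s/t⌋ t / s → 1`, the right-hand side
tends to `g t + 1/t + C ((t+R)^m - (t-R)^m) / t^m`, so `limsup g` is at most this. The error
`1/t + C ((t+R)^m - (t-R)^m) / t^m` vanishes as `t → ∞`, so letting `t → ∞` gives
`limsup g ≤ liminf g`, and the bounded function `g` converges.
-/

open Filter Topology

theorem Filter.tendsto_limsup_of_limsup_le_add {α : Type*} {l : Filter α} [l.NeBot]
    {g e : α → ℝ} (hle : IsBoundedUnder (· ≤ ·) l g) (hge : IsBoundedUnder (· ≥ ·) l g)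
    (he : Tendsto e l (𝓝 0)) (h : ∀ᶠ t in l, limsup g l ≤ g t + e t) :
    Tendsto g l (𝓝 (limsup g l)) := by
  have hsup_le_inf : limsup g l ≤ liminf g l := by
    refine le_of_forall_pos_le_add fun ε hε => ?_
    have hlower : ∀ᶠ t in l, limsup g l - ε ≤ g t := by
      filter_upwards [h, he.eventually (ge_mem_nhds hε)] with t ht het
      linarith
    linarith [le_liminf_of_le hle.isCoboundedUnder_ge hlower]
  exact tendsto_of_liminf_eq_limsup (le_antisymm (liminf_le_limsup hle hge) hsup_le_inf) rfl
    hle hge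

theorem tendsto_nat_floor_div_mul_div_atTop {t : ℝ} (ht : 0 < t) :
    Tendsto (fun s : ℝ => (⌊s / t⌋₊ : ℝ) * t / s) atTop (𝓝 1) := by
  have h := (tendsto_nat_floor_mul_div_atTop (inv_nonneg.2 ht.le)).mul_const t
  rw [inv_mul_cancel₀ ht.ne'] at h
  refine h.congr fun s => ?_
  rw [div_eq_inv_mul s t, mul_comm t⁻¹ s]
  ring

theorem tendsto_add_pow_sub_add_pow_div_pow_atTop (a b : ℝ) (m : ℕ) :
    Tendsto (fun t : ℝ => ((t + a) ^ m - (t + b) ^ m) / t ^ m) atTop (𝓝 0) := by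
  have hratio (c : ℝ) : Tendsto (fun t : ℝ => (1 + c / t) ^ m) atTop (𝓝 1) := by
    simpa using ((tendsto_const_nhds (x := c) |>.div_atTop tendsto_id).const_add 1).pow m
  refine ((hratio a).sub (hratio b)).congr' ?_ |>.mono_right (by rw [sub_self])
  filter_upwards [eventually_ne_atTop 0] with t ht
  rw [sub_div, ← div_pow, ← div_pow, add_div, add_div, div_self ht]

theorem limsup_le_of_almostSubadditive_at {g : ℝ → ℝ} (hge : IsBoundedUnder (· ≥ ·) atTop g)
    (m : ℕ) {C t G D : ℝ} (ht : 0 < t)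
    (hsub : ∀ s, t < s → g s ≤ (⌊s / t⌋₊ : ℝ) ^ m * (t ^ m / s ^ m) * G +
      (C / s ^ m) * (s ^ m - (⌊s / t⌋₊ : ℝ) ^ m * t ^ m + (⌊s / t⌋₊ : ℝ) ^ m * D)) :
    limsup g atTop ≤ G + C * (D / t ^ m) := by
  -- The right-hand side is `φ ((⌊s/t⌋ t / s) ^ m)`.
  set φ : ℝ → ℝ := fun x => x * G + C * (1 - x) + C * (D / t ^ m) * x
  have hφ : Tendsto (fun s : ℝ => φ (((⌊s / t⌋₊ : ℝ) * t / s) ^ m)) atTop (𝓝 (φ 1)) :=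
    ((show Continuous φ by fun_prop).tendsto 1).comp
      (by simpa using (tendsto_nat_floor_div_mul_div_atTop ht).pow m)
  have hφ_one : φ 1 = G + C * (D / t ^ m) := by simp [φ]
  rw [← hφ_one, ← hφ.limsup_eq]
  refine limsup_le_limsup ?_ hge.isCoboundedUnder_le hφ.isBoundedUnder_le
  filter_upwards [eventually_gt_atTop t] with s hts
  have hs : s ≠ 0 := (ht.trans hts).ne'
  refine (hsub s hts).trans_eq ?_
  simp only [φ, div_pow, mul_pow]
  field_simp
  ring

theorem almost_subadditive_limit_exists_general
    (m : ℕ) (g : ℝ → ℝ)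
    (hbdd : ∃ M : ℝ, ∀ t : ℝ, 0 < t → |g t| ≤ M)
    (C R : ℝ)
    (hsub : ∀ s t : ℝ, 0 < t → t < s →
      g s ≤ (⌊s / t⌋₊ : ℝ) ^ m * (t ^ m / s ^ m) * (g t + 1 / t) +
        (C / s ^ m) * (s ^ m - (⌊s / t⌋₊ : ℝ) ^ m * t ^ m +
          (⌊s / t⌋₊ : ℝ) ^ m * ((t + R) ^ m - (t - R) ^ m))) :
    ∃ L : ℝ, Filter.Tendsto g Filter.atTop (nhds L) := by
  obtain ⟨M, hM⟩ := hbdd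
  obtain ⟨hle, hge⟩ := isBoundedUnder_le_abs.1 <|
    isBoundedUnder_of_eventually_le ((eventually_gt_atTop 0).mono hM)
  have herror : Tendsto (fun t : ℝ => 1 / t + C * (((t + R) ^ m - (t - R) ^ m) / t ^ m))
      atTop (𝓝 0) := by
    simpa [sub_eq_add_neg] using tendsto_inv_atTop_zero.add
      ((tendsto_add_pow_sub_add_pow_div_pow_atTop R (-R) m).const_mul C)
  refine ⟨limsup g atTop, tendsto_limsup_of_limsup_le_add hle hge herror ?_⟩
  filter_upwards [eventually_gt_atTop 0] with t ht
  have hbound := limsup_le_of_almostSubadditive_at hge m ht (hsub · t ht)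
  linarith

theorem almost_subadditive_limit_exists
    (m : ℕ) (hm : 1 ≤ m) (g : ℝ → ℝ)
    (hbdd : ∃ M : ℝ, ∀ t : ℝ, 0 < t → |g t| ≤ M)
    (C R : ℝ) (hC : 0 < C) (hR : 0 < R)
    (hsub : ∀ s t : ℝ, 0 < t → t < s →
      g s ≤ (⌊s / t⌋₊ : ℝ) ^ m * (t ^ m / s ^ m) * (g t + 1 / t) +
        (C / s ^ m) * (s ^ m - (⌊s / t⌋₊ : ℝ) ^ m * t ^ m +
          (⌊s / t⌋₊ : ℝ) ^ m * ((t + R) ^ m - (t - R) ^ m))) :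
    ∃ L : ℝ, Filter.Tendsto g Filter.atTop (nhds L) :=
  almost_subadditive_limit_exists_general m g hbdd C R hsub
end
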